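/- arXiv:2504.04192 — 2 statements merged into one kernel-verified Lean document; each statement's English description precedes it below -/
import Mathlib

section
/- There exists a constant C > 0 such that for all ε ∈ (0,1), all γ ∈ ℝ and all ξ ∈ ℝ, one has |∫_{{x ∈ ℝ : ε < |x| < 1/ε}} e^{ixξ} x^{-1+iγ} dx| ≤ C (1+|γ|) e^{π|γ|}. -/
/-!
Write `w = -1 + iγ` and `J(η) = ∫_ε^{1/ε} e^{ixη} x^w dx`. On the negative half-line the
principal branch gives `(-x)^w = -e^{-πγ} x^w`, so the integral equals `J(ξ) - e^{-πγ} J(-ξ)`.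
Cut `[ε, 1/ε]` at `c ≈ 1/|ξ|`. Below `c` the phase `e^{ixξ}` is within `|xξ|` of `1`, and above
`c` one integration by parts gains a factor `1/(c|ξ|)`; hence `J(±ξ) = K + O(1 + |γ|)` with the
same non-oscillatory `K = ∫_ε^c x^w dx`. `K` is not bounded (it is `log (c/ε)` for `γ = 0`), but
it only survives with the factor `1 - e^{-πγ} = O(|γ| e^{π|γ|})`, and `|γ| |K| ≤ 2` because
`K = (c^{iγ} - ε^{iγ}) / (iγ)`.
-/

open MeasureTheory Real

open Complex (I)

lemma Real.abs_exp_sub_one_le_mul_exp (s : ℝ) : |Real.exp s - 1| ≤ |s| * Real.exp |s| := by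
  rcases le_or_gt 0 s with hs | hs
  · rw [abs_of_nonneg hs, abs_of_nonneg (by linarith [Real.one_le_exp hs])]
    have h := mul_le_mul_of_nonneg_right (Real.one_sub_le_exp_neg s) (Real.exp_pos s).le
    rw [← Real.exp_add, neg_add_cancel, Real.exp_zero] at h
    linarith
  · rw [abs_of_neg hs, abs_of_neg (by linarith [Real.exp_lt_one_iff.2 hs])]
    nlinarith [Real.add_one_le_exp s, Real.one_le_exp (neg_nonneg.2 hs.le)]

lemma Complex.ofReal_neg_cpow_neg_one_add_mul_I (γ : ℝ) {x : ℝ} (hx : 0 ≤ x) :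
    ((-x : ℝ) : ℂ) ^ (-1 + γ * I) = -(Real.exp (-(π * γ)) : ℂ) * (x : ℂ) ^ (-1 + γ * I) := by
  have hexp : Complex.exp (π * I * (-1 + γ * I)) = -(Real.exp (-(π * γ)) : ℂ) := by
    rw [show (π : ℂ) * I * (-1 + γ * I) = ((-(π * γ) : ℝ) : ℂ) - π * I by
      push_cast; linear_combination (π * γ : ℂ) * Complex.I_sq]
    rw [Complex.exp_sub, Complex.exp_pi_mul_I, Complex.ofReal_exp]
    ring
  rw [Complex.ofReal_cpow_of_nonpos (neg_nonpos.2 hx), hexp, Complex.ofReal_neg, neg_neg,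
    mul_comm]

lemma Complex.norm_exp_I_mul_ofReal_mul_ofReal (x ξ : ℝ) : ‖Complex.exp (I * x * ξ)‖ = 1 := by
  simp [Complex.norm_exp]

lemma Complex.norm_ofReal_cpow_of_re_eq_neg_one {w : ℂ} (hw : w.re = -1) {x : ℝ} (hx : 0 < x) :
    ‖(x : ℂ) ^ w‖ = x⁻¹ := by
  rw [Complex.norm_cpow_eq_rpow_re_of_pos hx, hw, Real.rpow_neg_one]

lemma hasDerivAt_cexp_I_mul_mul_div {ξ : ℝ} (hξ : ξ ≠ 0) (x : ℝ) :
    HasDerivAt (fun y : ℝ => Complex.exp (I * y * ξ) / (I * ξ)) (Complex.exp (I * x * ξ)) x := by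
  have hIξ : I * ξ ≠ 0 := mul_ne_zero Complex.I_ne_zero (Complex.ofReal_ne_zero.2 hξ)
  refine ((((hasDerivAt_id x).ofReal_comp.const_mul I).mul_const (ξ : ℂ)).cexp.div_const
    (I * ξ)).congr_deriv ?_
  rw [id_eq, Complex.ofReal_one, mul_one, mul_div_cancel_right₀ _ hIξ]

section

variable {a b : ℝ}

lemma zero_notMem_uIcc_of_pos (ha : 0 < a) (hab : a ≤ b) : (0 : ℝ) ∉ Set.uIcc a b := by
  rw [Set.uIcc_of_le hab]; exact fun h => ha.not_ge h.1

lemma integral_inv_sq (h0 : (0 : ℝ) ∉ Set.uIcc a b) :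
    ∫ x in a..b, (x ^ 2)⁻¹ = a⁻¹ - b⁻¹ := by
  have h := integral_zpow (n := -2) (Or.inr ⟨by norm_num, h0⟩)
  norm_num at h
  rw [h]
  ring

lemma integral_abs_mem_Ioo {E : Type*} [NormedAddCommGroup E] [NormedSpace ℝ E] {f : ℝ → E}
    (ha : 0 ≤ a) (hab : a ≤ b) (hf : IntervalIntegrable f volume a b)
    (hf_neg : IntervalIntegrable (fun x => f (-x)) volume a b) :
    ∫ x in {x : ℝ | a < |x| ∧ |x| < b}, f x = (∫ x in a..b, f x) + ∫ x in a..b, f (-x) := by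
  have hset : {x : ℝ | a < |x| ∧ |x| < b} = Set.Ioo (-b) (-a) ∪ Set.Ioo a b := by
    ext x
    simp only [Set.mem_ofPred_eq, Set.mem_union, Set.mem_Ioo, lt_abs, abs_lt]
    constructor
    · rintro ⟨h | h, h1, h2⟩
      · right; exact ⟨h, h2⟩
      · left; constructor <;> linarith
    · rintro (⟨h1, h2⟩ | ⟨h1, h2⟩)
      · exact ⟨Or.inr (by linarith), by linarith, by linarith⟩
      · exact ⟨Or.inl h1, by linarith, h2⟩
  have hdisj : Disjoint (Set.Ioo (-b) (-a)) (Set.Ioo a b) :=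
    Set.disjoint_left.2 fun x h1 h2 => by linarith [h1.2, h2.1]
  have hf_neg' : IntervalIntegrable f volume (-b) (-a) := by
    simpa using ((IntervalIntegrable.iff_comp_neg (f := fun x => f (-x))).1 hf_neg).symm
  rw [hset, setIntegral_union hdisj measurableSet_Ioo
    (hf_neg'.1.mono_set Set.Ioo_subset_Ioc_self) (hf.1.mono_set Set.Ioo_subset_Ioc_self),
    add_comm, intervalIntegral.integral_comp_neg, intervalIntegral.integral_of_le hab,
    intervalIntegral.integral_of_le (neg_le_neg hab), integral_Ioc_eq_integral_Ioo,
    integral_Ioc_eq_integral_Ioo]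

lemma exists_mem_Icc_sub_mul_le_one {t : ℝ} (ha : 0 ≤ a) (hab : a ≤ b) (ht : 0 ≤ t) :
    ∃ c ∈ Set.Icc a b, (c - a) * t ≤ 1 ∧ (c = b ∨ 1 ≤ c * t) := by
  rcases le_or_gt (b * t) 1 with hbt | hbt
  · exact ⟨b, ⟨hab, le_rfl⟩, by nlinarith, Or.inl rfl⟩
  rcases le_or_gt 1 (a * t) with hat | hat
  · exact ⟨a, ⟨le_rfl, hab⟩, by simp, Or.inr hat⟩
  have ht0 : 0 < t := by nlinarith
  refine ⟨t⁻¹, ⟨?_, ?_⟩, ?_, Or.inr ?_⟩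
  · rw [← one_div, le_div_iff₀ ht0]; exact hat.le
  · rw [← one_div, div_le_iff₀ ht0]; exact hbt.le
  · rw [sub_mul, inv_mul_cancel₀ ht0.ne']; nlinarith
  · rw [inv_mul_cancel₀ ht0.ne']

lemma intervalIntegrable_cexp_mul_cpow (ξ : ℝ) (w : ℂ) (ha : 0 < a) (hab : a ≤ b) :
    IntervalIntegrable (fun x : ℝ => Complex.exp (I * x * ξ) * (x : ℂ) ^ w) volume a b :=
  (intervalIntegral.intervalIntegrable_cpow (Or.inr (zero_notMem_uIcc_of_pos ha hab))
    ).continuousOn_mul (by fun_prop)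

lemma abs_im_mul_norm_integral_cpow_le {w : ℂ} (hw : w.re = -1) (ha : 0 < a) (hab : a ≤ b) :
    |w.im| * ‖∫ x in a..b, (x : ℂ) ^ w‖ ≤ 2 := by
  rcases eq_or_ne w.im 0 with him | him
  · simp [him]
  have hw1 : w + 1 = w.im * I := by
    apply Complex.ext <;> simp [hw]
  have hunit : ∀ x : ℝ, 0 < x → ‖(x : ℂ) ^ (w + 1)‖ = 1 := fun x hx => by
    rw [Complex.norm_cpow_eq_rpow_re_of_pos hx]; simp [hw]
  rw [integral_cpow (Or.inr ⟨fun h => by simp [h] at him, zero_notMem_uIcc_of_pos ha hab⟩),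
    norm_div, hw1, norm_mul, Complex.norm_I, mul_one, Complex.norm_real, Real.norm_eq_abs,
    mul_div_cancel₀ _ (abs_ne_zero.2 him), ← hw1]
  calc ‖(b : ℂ) ^ (w + 1) - (a : ℂ) ^ (w + 1)‖
      ≤ ‖(b : ℂ) ^ (w + 1)‖ + ‖(a : ℂ) ^ (w + 1)‖ := norm_sub_le _ _
    _ = 2 := by rw [hunit b (ha.trans_le hab), hunit a ha]; norm_num

lemma norm_integral_cexp_sub_one_mul_cpow_le (ξ : ℝ) {w : ℂ} (hw : w.re = -1) (ha : 0 < a)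
    (hab : a ≤ b) :
    ‖∫ x in a..b, (Complex.exp (I * x * ξ) - 1) * (x : ℂ) ^ w‖ ≤ |ξ| * (b - a) := by
  have hbound : ∀ x ∈ Set.uIoc a b, ‖(Complex.exp (I * x * ξ) - 1) * (x : ℂ) ^ w‖ ≤ |ξ| := by
    intro x hx
    rw [Set.uIoc_of_le hab] at hx
    have hx0 : 0 < x := ha.trans hx.1
    rw [norm_mul, Complex.norm_ofReal_cpow_of_re_eq_neg_one hw hx0]
    have h := Real.norm_exp_I_mul_ofReal_sub_one_le (x := x * ξ)
    rw [Complex.ofReal_mul, ← mul_assoc, Real.norm_eq_abs, abs_mul, abs_of_pos hx0] at h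
    calc ‖Complex.exp (I * x * ξ) - 1‖ * x⁻¹ ≤ x * |ξ| * x⁻¹ := by gcongr
      _ = |ξ| := by field_simp
  simpa [abs_of_nonneg (sub_nonneg.2 hab)] using
    intervalIntegral.norm_integral_le_of_norm_le_const hbound

lemma integral_cexp_mul_cpow_eq {ξ : ℝ} (hξ : ξ ≠ 0) {w : ℂ} (hw : w ≠ 0) (ha : 0 < a)
    (hab : a ≤ b) :
    ∫ x in a..b, Complex.exp (I * x * ξ) * (x : ℂ) ^ w =
      (b : ℂ) ^ w * (Complex.exp (I * b * ξ) / (I * ξ))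
        - (a : ℂ) ^ w * (Complex.exp (I * a * ξ) / (I * ξ))
        - ∫ x in a..b, w * (x : ℂ) ^ (w - 1) * (Complex.exp (I * x * ξ) / (I * ξ)) := by
  have h0 := zero_notMem_uIcc_of_pos ha hab
  simp_rw [mul_comm (Complex.exp _)]
  exact intervalIntegral.integral_mul_deriv_eq_deriv_mul
    (fun x hx => hasDerivAt_ofReal_cpow_const (ne_of_mem_of_not_mem hx h0) hw)
    (fun x _ => hasDerivAt_cexp_I_mul_mul_div hξ x)
    ((intervalIntegral.intervalIntegrable_cpow (Or.inr h0)).const_mul w)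
    ((by fun_prop : Continuous fun x : ℝ => Complex.exp (I * x * ξ)).intervalIntegrable _ _)

lemma norm_integral_mul_cpow_sub_one_mul_cexp_div_le (ξ : ℝ) {w : ℂ} (hw : w.re = -1)
    (ha : 0 < a) (hab : a ≤ b) :
    ‖∫ x in a..b, w * (x : ℂ) ^ (w - 1) * (Complex.exp (I * x * ξ) / (I * ξ))‖ ≤
      ‖w‖ / |ξ| * (a⁻¹ - b⁻¹) := by
  have hle : ∀ x ∈ Set.Ioc a b,
      ‖w * (x : ℂ) ^ (w - 1) * (Complex.exp (I * x * ξ) / (I * ξ))‖ ≤ ‖w‖ / |ξ| * (x ^ 2)⁻¹ := by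
    intro x hx
    have hx0 : 0 < x := ha.trans hx.1
    simp only [norm_mul, norm_div, Complex.norm_cpow_eq_rpow_re_of_pos hx0,
      Complex.norm_exp_I_mul_ofReal_mul_ofReal, Complex.norm_I, Complex.norm_real,
      Real.norm_eq_abs, Complex.sub_re, hw, Complex.one_re]
    rw [show (-1 - 1 : ℝ) = -(2 : ℕ) by norm_num, Real.rpow_neg hx0.le, Real.rpow_natCast]
    exact le_of_eq (by ring)
  have hg : IntervalIntegrable (fun x : ℝ => ‖w‖ / |ξ| * (x ^ 2)⁻¹) volume a b :=
    (continuousOn_const.mul ((continuous_pow 2).continuousOn.inv₀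
      fun x hx => pow_ne_zero 2 (ne_of_mem_of_not_mem hx (zero_notMem_uIcc_of_pos ha hab)))
      ).intervalIntegrable
  refine (intervalIntegral.norm_integral_le_of_norm_le hab
    (Filter.Eventually.of_forall hle) hg).trans_eq ?_
  rw [intervalIntegral.integral_const_mul, integral_inv_sq (zero_notMem_uIcc_of_pos ha hab)]

lemma norm_integral_cexp_mul_cpow_le {ξ : ℝ} (hξ : ξ ≠ 0) {w : ℂ} (hw : w.re = -1) (ha : 0 < a)
    (hab : a ≤ b) :
    ‖∫ x in a..b, Complex.exp (I * x * ξ) * (x : ℂ) ^ w‖ ≤ (2 + ‖w‖) / (a * |ξ|) := by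
  have hb : 0 < b := ha.trans_le hab
  have hboundary : ∀ x : ℝ, 0 < x →
      ‖(x : ℂ) ^ w * (Complex.exp (I * x * ξ) / (I * ξ))‖ = x⁻¹ / |ξ| := fun x hx => by
    simp only [norm_mul, norm_div, Complex.norm_ofReal_cpow_of_re_eq_neg_one hw hx,
      Complex.norm_exp_I_mul_ofReal_mul_ofReal, Complex.norm_I, Complex.norm_real,
      Real.norm_eq_abs]
    ring
  rw [integral_cexp_mul_cpow_eq hξ (fun h => by simp [h] at hw) ha hab]
  calc _ ≤ ‖(b : ℂ) ^ w * (Complex.exp (I * b * ξ) / (I * ξ))‖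
        + ‖(a : ℂ) ^ w * (Complex.exp (I * a * ξ) / (I * ξ))‖
        + ‖∫ x in a..b, w * (x : ℂ) ^ (w - 1) * (Complex.exp (I * x * ξ) / (I * ξ))‖ :=
        norm_sub_le_of_le (norm_sub_le _ _) le_rfl
    _ ≤ b⁻¹ / |ξ| + a⁻¹ / |ξ| + ‖w‖ / |ξ| * (a⁻¹ - b⁻¹) := by
        rw [hboundary b hb, hboundary a ha]
        gcongr
        exact norm_integral_mul_cpow_sub_one_mul_cexp_div_le ξ hw ha hab
    _ = (b⁻¹ + a⁻¹ + ‖w‖ * (a⁻¹ - b⁻¹)) / |ξ| := by ring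
    _ ≤ (2 + ‖w‖) * a⁻¹ / |ξ| := by
        gcongr
        nlinarith [inv_anti₀ ha hab, inv_nonneg.2 hb.le, norm_nonneg w]
    _ = (2 + ‖w‖) / (a * |ξ|) := by ring

lemma norm_integral_cexp_mul_cpow_sub_integral_cpow_le (ξ : ℝ) {w : ℂ} (hw : w.re = -1)
    {c : ℝ} (ha : 0 < a) (hc : c ∈ Set.Icc a b) (hca : (c - a) * |ξ| ≤ 1)
    (hcb : c = b ∨ 1 ≤ c * |ξ|) :
    ‖(∫ x in a..b, Complex.exp (I * x * ξ) * (x : ℂ) ^ w) - ∫ x in a..c, (x : ℂ) ^ w‖ ≤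
      3 + ‖w‖ := by
  have hc0 : 0 < c := ha.trans_le hc.1
  have hnear : ‖∫ x in a..c, (Complex.exp (I * x * ξ) - 1) * (x : ℂ) ^ w‖ ≤ 1 :=
    (norm_integral_cexp_sub_one_mul_cpow_le ξ hw ha hc.1).trans (by linarith)
  have hfar : ‖∫ x in c..b, Complex.exp (I * x * ξ) * (x : ℂ) ^ w‖ ≤ 2 + ‖w‖ := by
    rcases hcb with rfl | hcξ
    · simp only [intervalIntegral.integral_same, norm_zero]; positivity
    have hξ : ξ ≠ 0 := by rintro rfl; simp at hcξ; linarith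
    refine (norm_integral_cexp_mul_cpow_le hξ hw hc0 hc.2).trans ?_
    exact div_le_self (by positivity) hcξ
  have hsplit : (∫ x in a..b, Complex.exp (I * x * ξ) * (x : ℂ) ^ w) - ∫ x in a..c, (x : ℂ) ^ w
      = (∫ x in a..c, (Complex.exp (I * x * ξ) - 1) * (x : ℂ) ^ w)
        + ∫ x in c..b, Complex.exp (I * x * ξ) * (x : ℂ) ^ w := by
    rw [← intervalIntegral.integral_add_adjacent_intervals
      (intervalIntegrable_cexp_mul_cpow ξ w ha hc.1)
      (intervalIntegrable_cexp_mul_cpow ξ w hc0 hc.2)]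
    simp_rw [sub_mul, one_mul]
    rw [intervalIntegral.integral_sub (intervalIntegrable_cexp_mul_cpow ξ w ha hc.1)
      (intervalIntegral.intervalIntegrable_cpow (Or.inr (zero_notMem_uIcc_of_pos ha hc.1)))]
    ring
  rw [hsplit]
  exact (norm_add_le_of_le hnear hfar).trans_eq (by ring)

lemma integral_abs_mem_Ioo_cexp_mul_cpow (ξ γ : ℝ) (ha : 0 < a) (hab : a ≤ b) :
    ∫ x in {x : ℝ | a < |x| ∧ |x| < b}, Complex.exp (I * x * ξ) * (x : ℂ) ^ (-1 + γ * I) =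
      (∫ x in a..b, Complex.exp (I * x * ξ) * (x : ℂ) ^ (-1 + γ * I))
        - Real.exp (-(π * γ)) *
          ∫ x in a..b, Complex.exp (I * x * ↑(-ξ)) * (x : ℂ) ^ (-1 + γ * I) := by
  have hreflect : Set.EqOn
      (fun x : ℝ => Complex.exp (I * ↑(-x) * ξ) * ((-x : ℝ) : ℂ) ^ (-1 + γ * I))
      (fun x => -(Real.exp (-(π * γ)) : ℂ) *
        (Complex.exp (I * x * ↑(-ξ)) * (x : ℂ) ^ (-1 + γ * I)))
      (Set.uIcc a b) := by
    intro x hx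
    rw [Set.uIcc_of_le hab] at hx
    dsimp only
    rw [Complex.ofReal_neg_cpow_neg_one_add_mul_I γ (ha.le.trans hx.1)]
    simp only [Complex.ofReal_neg, mul_neg, neg_mul]
    ring
  rw [integral_abs_mem_Ioo ha.le hab (intervalIntegrable_cexp_mul_cpow ξ _ ha hab)
    (((intervalIntegrable_cexp_mul_cpow (-ξ) _ ha hab).const_mul _).congr
      (hreflect.symm.mono Set.uIoc_subset_uIcc)),
    intervalIntegral.integral_congr hreflect, intervalIntegral.integral_const_mul]
  ring

end

lemma norm_sub_ofReal_mul_le (J₁ J₂ K : ℂ) {E : ℝ} (hE : 0 ≤ E) :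
    ‖J₁ - E * J₂‖ ≤ ‖J₁ - K‖ + E * ‖J₂ - K‖ + |1 - E| * ‖K‖ := by
  calc ‖J₁ - E * J₂‖ = ‖(J₁ - K) - E * (J₂ - K) + ((1 - E : ℝ) : ℂ) * K‖ := by
        push_cast; ring_nf
    _ ≤ ‖J₁ - K‖ + ‖(E : ℂ) * (J₂ - K)‖ + ‖((1 - E : ℝ) : ℂ) * K‖ :=
        norm_add_le_of_le (norm_sub_le _ _) le_rfl
    _ = ‖J₁ - K‖ + E * ‖J₂ - K‖ + |1 - E| * ‖K‖ := by
        rw [norm_mul, norm_mul, Complex.norm_real, Complex.norm_real, Real.norm_eq_abs,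
          Real.norm_eq_abs, abs_of_nonneg hE]

lemma norm_sub_exp_neg_pi_mul_le {J₁ J₂ K : ℂ} {γ M : ℝ} (h₁ : ‖J₁ - K‖ ≤ M) (h₂ : ‖J₂ - K‖ ≤ M)
    (hK : |γ| * ‖K‖ ≤ 2) :
    ‖J₁ - Real.exp (-(π * γ)) * J₂‖ ≤ (2 * M + 2 * π) * Real.exp (π * |γ|) := by
  have hπγ : |π * γ| = π * |γ| := by rw [abs_mul, abs_of_pos pi_pos]
  have hM : 0 ≤ M := (norm_nonneg _).trans h₁
  have hX : 1 ≤ Real.exp (π * |γ|) := Real.one_le_exp (by positivity)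
  have hE : Real.exp (-(π * γ)) ≤ Real.exp (π * |γ|) :=
    Real.exp_le_exp.2 ((neg_le_abs _).trans_eq hπγ)
  have hcancel : |1 - Real.exp (-(π * γ))| * ‖K‖ ≤ 2 * π * Real.exp (π * |γ|) :=
    calc |1 - Real.exp (-(π * γ))| * ‖K‖ ≤ π * |γ| * Real.exp (π * |γ|) * ‖K‖ := by
          gcongr
          simpa [abs_sub_comm, hπγ] using Real.abs_exp_sub_one_le_mul_exp (-(π * γ))
      _ = π * Real.exp (π * |γ|) * (|γ| * ‖K‖) := by ring
      _ ≤ π * Real.exp (π * |γ|) * 2 := by gcongr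
      _ = 2 * π * Real.exp (π * |γ|) := by ring
  calc _ ≤ ‖J₁ - K‖ + Real.exp (-(π * γ)) * ‖J₂ - K‖ + |1 - Real.exp (-(π * γ))| * ‖K‖ :=
        norm_sub_ofReal_mul_le _ _ _ (Real.exp_pos _).le
    _ ≤ M + Real.exp (π * |γ|) * M + 2 * π * Real.exp (π * |γ|) := by gcongr
    _ ≤ (2 * M + 2 * π) * Real.exp (π * |γ|) := by nlinarith

/-- There exists `C > 0` such that for all `ε ∈ (0,1)`, all `γ ∈ ℝ` and all `ξ ∈ ℝ`,
`|∫_{ε<|x|<1/ε} e^{ixξ} x^{-1+iγ} dx| ≤ C (1+|γ|) e^{π|γ|}`, where the complex power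
`x^{-1+iγ}` is taken with the principal branch of the logarithm. -/
theorem stmt0 :
    ∃ C : ℝ, 0 < C ∧ ∀ ε γ ξ : ℝ, ε ∈ Set.Ioo (0 : ℝ) 1 →
      ‖∫ x in {x : ℝ | ε < |x| ∧ |x| < 1 / ε},
          Complex.exp (Complex.I * x * ξ) * (x : ℂ) ^ ((-1 : ℂ) + γ * Complex.I)‖ ≤
        C * (1 + |γ|) * Real.exp (π * |γ|) := by
  refine ⟨8 + 2 * π, by positivity, fun ε γ ξ ⟨hε0, hε1⟩ => ?_⟩
  have hab : ε ≤ 1 / ε := by rw [le_div_iff₀ hε0]; nlinarith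
  have hw : ((-1 : ℂ) + γ * I).re = -1 := by simp
  have hw_norm : ‖(-1 : ℂ) + γ * I‖ ≤ 1 + |γ| := (norm_add_le _ _).trans (by simp)
  obtain ⟨c, hc, hca, hcb⟩ := exists_mem_Icc_sub_mul_le_one hε0.le hab (abs_nonneg ξ)
  have hJ : ∀ η : ℝ, |η| = |ξ| →
      ‖(∫ x in ε..1 / ε, Complex.exp (I * x * η) * (x : ℂ) ^ ((-1 : ℂ) + γ * I))
        - ∫ x in ε..c, (x : ℂ) ^ ((-1 : ℂ) + γ * I)‖ ≤ 4 * (1 + |γ|) := fun η hη => by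
    have := norm_integral_cexp_mul_cpow_sub_integral_cpow_le η hw hε0 hc (hη ▸ hca) (hη ▸ hcb)
    linarith [abs_nonneg γ]
  have hK : |γ| * ‖∫ x in ε..c, (x : ℂ) ^ ((-1 : ℂ) + γ * I)‖ ≤ 2 := by
    simpa using abs_im_mul_norm_integral_cpow_le hw hε0 hc.1
  rw [integral_abs_mem_Ioo_cexp_mul_cpow ξ γ hε0 hab]
  refine (norm_sub_exp_neg_pi_mul_le (hJ ξ rfl) (hJ (-ξ) (abs_neg ξ)) hK).trans
    (mul_le_mul_of_nonneg_right ?_ (Real.exp_pos _).le)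
  nlinarith [mul_nonneg pi_pos.le (abs_nonneg γ)]
end

section
/- There exists a constant C > 0 such that for all R ∈ (1,∞) and all γ ∈ ℝ, one has |∫_{{t ∈ ℝ : 1 < |t| < R}} e^{it} t^{-1+iγ} dt| ≤ C (1+|γ|) e^{π|γ|}. -/
/-!
Split the domain into `[-R, -1]` and `[1, R]` and integrate by parts on each piece, using
`-i e^{it}` as an antiderivative of `e^{it}`. For the principal branch,
`|t^w| ≤ |t|^{Re w} e^{π |Im w|}`, so with `w = -1 + iγ` both boundary terms are at most
`e^{π|γ|}`, while the new integrand `-i e^{it} w t^{w-1}` is bounded by `|w| e^{π|γ|} t^{-2}`,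
whose integral is at most `2 |w| e^{π|γ|}` however large `R` is.
-/

open MeasureTheory Real Set
open Complex (I)
open scoped Interval

lemma norm_ofReal_cpow_le (t : ℝ) (c : ℂ) :
    ‖(t : ℂ) ^ c‖ ≤ |t| ^ c.re * Real.exp (π * |c.im|) := by
  refine (Complex.norm_cpow_le _ _).trans ?_
  rw [div_eq_mul_inv, ← Real.exp_neg, Complex.norm_real, Real.norm_eq_abs]
  gcongr
  calc -(Complex.arg t * c.im) ≤ |Complex.arg t| * |c.im| := by
        rw [← abs_mul]; exact neg_le_abs _
    _ ≤ π * |c.im| := by gcongr; exact Complex.abs_arg_le_pi _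

lemma norm_ofReal_cpow_le_of_one_le_abs {t : ℝ} (ht : 1 ≤ |t|) {c : ℂ} {r : ℝ}
    (hc : c.re ≤ r) :
    ‖(t : ℂ) ^ c‖ ≤ |t| ^ r * Real.exp (π * |c.im|) :=
  (norm_ofReal_cpow_le t c).trans (by gcongr)

lemma abs_integral_zpow_neg_two_le {a b : ℝ} (h : ∀ t ∈ [[a, b]], 1 ≤ |t|) :
    |∫ t in a..b, t ^ (-2 : ℤ)| ≤ 2 := by
  have h0 : (0 : ℝ) ∉ [[a, b]] := fun h0 => absurd (h 0 h0) (by norm_num)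
  have hinv : ∀ t ∈ [[a, b]], |t⁻¹| ≤ 1 := fun t ht => by
    rw [abs_inv]; exact inv_le_one_of_one_le₀ (h t ht)
  rw [integral_zpow (Or.inr ⟨by norm_num, h0⟩)]
  norm_num [div_neg]
  calc |a⁻¹ - b⁻¹| ≤ |a⁻¹| + |b⁻¹| := abs_sub _ _
    _ ≤ 1 + 1 := add_le_add (hinv a left_mem_uIcc) (hinv b right_mem_uIcc)
    _ = 2 := by norm_num

lemma hasDerivAt_neg_I_mul_cexp_I_mul (t : ℝ) :
    HasDerivAt (fun s : ℝ => -I * Complex.exp (I * s)) (Complex.exp (I * t)) t := by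
  have := ((hasDerivAt_id t).ofReal_comp.const_mul I).cexp.const_mul (-I)
  simp only [id, Complex.ofReal_one, mul_one] at this
  exact this.congr_deriv (by linear_combination (-Complex.exp (I * t)) * Complex.I_sq)

lemma continuousOn_cexp_I_mul_mul_cpow (w : ℂ) {s : Set ℝ} (h0 : (0 : ℝ) ∉ s) :
    ContinuousOn (fun t : ℝ => Complex.exp (I * t) * (t : ℂ) ^ w) s := fun t ht =>
  ((by fun_prop : Continuous fun t : ℝ => Complex.exp (I * t)).continuousAt.mul
    (Complex.continuousAt_ofReal_cpow_const t w
      (Or.inr (ne_of_mem_of_not_mem ht h0)))).continuousWithinAt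

lemma integral_cexp_I_mul_mul_cpow {a b : ℝ} {w : ℂ} (hw : w ≠ 0)
    (h0 : (0 : ℝ) ∉ [[a, b]]) :
    ∫ t in a..b, Complex.exp (I * t) * (t : ℂ) ^ w =
      -I * Complex.exp (I * b) * (b : ℂ) ^ w - -I * Complex.exp (I * a) * (a : ℂ) ^ w
        - ∫ t in a..b, -I * Complex.exp (I * t) * (w * (t : ℂ) ^ (w - 1)) := by
  have hne : ∀ t ∈ [[a, b]], t ≠ 0 := fun t ht => ne_of_mem_of_not_mem ht h0
  rw [intervalIntegral.integral_mul_deriv_eq_deriv_mul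
    (fun t _ => hasDerivAt_neg_I_mul_cexp_I_mul t)
    (fun t ht => hasDerivAt_ofReal_cpow_const (hne t ht) hw)]
  · exact (sub_sub_cancel _ _).symm
  · exact (by fun_prop : Continuous fun t : ℝ => Complex.exp (I * t)).intervalIntegrable a b
  · exact (continuousOn_const.mul fun t ht => (Complex.continuousAt_ofReal_cpow_const t _
      (Or.inr (hne t ht))).continuousWithinAt).intervalIntegrable

lemma norm_integral_cexp_I_mul_mul_cpow_le {a b : ℝ} {w : ℂ} (hw : w.re ≤ -1)
    (h : ∀ t ∈ [[a, b]], 1 ≤ |t|) :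
    ‖∫ t in a..b, Complex.exp (I * t) * (t : ℂ) ^ w‖ ≤
      2 * (1 + ‖w‖) * Real.exp (π * |w.im|) := by
  set E := Real.exp (π * |w.im|)
  have h0 : (0 : ℝ) ∉ [[a, b]] := fun h0 => absurd (h 0 h0) (by norm_num)
  have hw0 : w ≠ 0 := by rintro rfl; norm_num at hw
  have hboundary : ∀ t ∈ [[a, b]], ‖-I * Complex.exp (I * t) * (t : ℂ) ^ w‖ ≤ E :=
      fun t ht => by
    simpa [norm_mul, Complex.norm_exp_ofReal_mul_I] using
      norm_ofReal_cpow_le_of_one_le_abs (h t ht) (hw.trans (by norm_num : (-1 : ℝ) ≤ 0))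
  have hremainder : ∀ t ∈ [[a, b]],
      ‖-I * Complex.exp (I * t) * (w * (t : ℂ) ^ (w - 1))‖ ≤ ‖w‖ * E * t ^ (-2 : ℤ) :=
        fun t ht => by
    have := norm_ofReal_cpow_le_of_one_le_abs (h t ht) (c := w - 1) (r := ((-2 : ℤ) : ℝ))
      (by simp; linarith)
    rw [Real.rpow_intCast, (by decide : Even (-2 : ℤ)).zpow_abs] at this
    simp only [Complex.sub_im, Complex.one_im, sub_zero] at this
    calc _ = ‖w‖ * ‖(t : ℂ) ^ (w - 1)‖ := by simp
      _ ≤ ‖w‖ * (t ^ (-2 : ℤ) * E) := by gcongr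
      _ = _ := by ring
  have hintegral :
      ‖∫ t in a..b, -I * Complex.exp (I * t) * (w * (t : ℂ) ^ (w - 1))‖ ≤
        ‖w‖ * E * 2 := by
    refine (intervalIntegral.norm_integral_le_abs_of_norm_le
      (g := fun t => ‖w‖ * E * t ^ (-2 : ℤ)) ?_ ?_).trans ?_
    · filter_upwards [ae_restrict_mem measurableSet_uIoc] with t ht
      exact hremainder t (uIoc_subset_uIcc ht)
    · exact (continuousOn_const.mul fun t ht => (continuousAt_zpow₀ t _
        (Or.inl (ne_of_mem_of_not_mem ht h0))).continuousWithinAt).intervalIntegrable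
    · rw [intervalIntegral.integral_const_mul, abs_mul, abs_of_nonneg (by positivity)]
      gcongr
      exact abs_integral_zpow_neg_two_le h
  rw [integral_cexp_I_mul_mul_cpow hw0 h0]
  calc _ ≤ E + E + ‖w‖ * E * 2 := by
        refine (norm_sub_le _ _).trans (add_le_add ((norm_sub_le _ _).trans ?_) hintegral)
        exact add_le_add (hboundary b right_mem_uIcc) (hboundary a left_mem_uIcc)
    _ = 2 * (1 + ‖w‖) * E := by ring

lemma setIntegral_one_lt_abs_lt {E : Type*} [NormedAddCommGroup E] [NormedSpace ℝ E]
    {f : ℝ → E} {R : ℝ} (hR : 1 ≤ R) (hneg : IntervalIntegrable f volume (-R) (-1))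
    (hpos : IntervalIntegrable f volume 1 R) :
    ∫ t in {t : ℝ | 1 < |t| ∧ |t| < R}, f t =
      (∫ t in (-R)..(-1), f t) + ∫ t in 1..R, f t := by
  have hset : {t : ℝ | 1 < |t| ∧ |t| < R} = Ioo (-R) (-1) ∪ Ioo 1 R := by
    ext t
    simp only [mem_ofPred_eq, mem_union, mem_Ioo, lt_abs, abs_lt]
    constructor
    · rintro ⟨h1 | h1, h2, h3⟩
      · exact Or.inr ⟨h1, h3⟩
      · exact Or.inl ⟨by linarith, by linarith⟩
    · rintro (⟨h1, h2⟩ | ⟨h1, h2⟩)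
      · exact ⟨Or.inr (by linarith), by linarith, by linarith⟩
      · exact ⟨Or.inl h1, by linarith, h2⟩
  have hdisj : Disjoint (Ioo (-R) (-1)) (Ioo 1 R) :=
    disjoint_left.mpr fun t h1 h2 => by linarith [h1.2, h2.1]
  rw [hset, setIntegral_union hdisj measurableSet_Ioo
      (hneg.1.mono_set Ioo_subset_Ioc_self) (hpos.1.mono_set Ioo_subset_Ioc_self),
    intervalIntegral.integral_of_le (by linarith), intervalIntegral.integral_of_le hR,
    integral_Ioc_eq_integral_Ioo, integral_Ioc_eq_integral_Ioo]

/-- There exists `C > 0` such that for all `R ∈ (1,∞)` and all `γ ∈ ℝ`,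
`|∫_{1<|t|<R} e^{it} t^{-1+iγ} dt| ≤ C (1+|γ|) e^{π|γ|}`, the complex power being taken
with the principal branch of the logarithm. -/
theorem stmt2 :
    ∃ C : ℝ, 0 < C ∧ ∀ R γ : ℝ, 1 < R →
      ‖∫ t in {t : ℝ | 1 < |t| ∧ |t| < R},
          Complex.exp (Complex.I * t) * (t : ℂ) ^ ((-1 : ℂ) + γ * Complex.I)‖ ≤
        C * (1 + |γ|) * Real.exp (π * |γ|) := by
  refine ⟨8, by norm_num, fun R γ hR => ?_⟩
  set w : ℂ := -1 + γ * I
  have hw : w.re ≤ -1 := by simp [w]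
  have hw_im : w.im = γ := by simp [w]
  have hw_norm : ‖w‖ ≤ 1 + |γ| := (norm_add_le _ _).trans (by simp)
  have hneg : ∀ t ∈ [[-R, -1]], 1 ≤ |t| := fun t ht => by
    rw [uIcc_of_le (by linarith)] at ht
    rw [abs_of_neg (by linarith [ht.2])]; linarith [ht.2]
  have hpos : ∀ t ∈ [[1, R]], 1 ≤ |t| := fun t ht => by
    rw [uIcc_of_le hR.le] at ht
    rw [abs_of_pos (by linarith [ht.1])]; exact ht.1
  have hintegrable (a b : ℝ) (h : ∀ t ∈ [[a, b]], 1 ≤ |t|) :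
      IntervalIntegrable (fun t : ℝ => Complex.exp (I * t) * (t : ℂ) ^ w) volume a b :=
    ContinuousOn.intervalIntegrable <|
      continuousOn_cexp_I_mul_mul_cpow w fun h0 => absurd (h 0 h0) (by norm_num)
  rw [setIntegral_one_lt_abs_lt hR.le (hintegrable _ _ hneg) (hintegrable _ _ hpos)]
  calc _ ≤ 2 * (2 * (1 + ‖w‖) * Real.exp (π * |w.im|)) := by
        rw [two_mul]
        exact (norm_add_le _ _).trans (add_le_add (norm_integral_cexp_I_mul_mul_cpow_le hw hneg)
          (norm_integral_cexp_I_mul_mul_cpow_le hw hpos))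
    _ ≤ 8 * (1 + |γ|) * Real.exp (π * |γ|) := by
        rw [hw_im]; nlinarith [Real.exp_pos (π * |γ|), abs_nonneg γ]
end
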